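/- Let $v \in H^1(B_{r_0})$ where $B_\rho$ denote concentric disks in $\mathbb{R}^2$, $r_0 \leq 1/2$. If $\|\nabla v\|_{L^2}^2 \leq C_1 K^2$ and for all $\rho \in [r, \sqrt{r}]$ (with $r \leq r_0^2$) one has $\mathrm{osc}_{\partial B_\rho} v \geq \mathrm{osc}_{B_r} v - C_2 K \rho^2$, and additionally $C_1 K^2 \geq \int_r^{\sqrt r} \rho^{-1} (\mathrm{osc}_{\partial B_\rho} v)^2\, d\rho$, then $\mathrm{osc}_{B_r} v \leq \frac{C K}{\sqrt{\log(1/r)}}$ for a constant $C$ depending only on $C_1, C_2$. -/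

import Mathlib

/-!
If the oscillation of `v` on `B_r` is large compared with `C₂ K r`, the hypothesis on spheres
gives `osc_{∂B_ρ} v ≥ ½ osc_{B_r} v` for every `ρ ∈ [r, √r]`; since `∫_r^{√r} dρ/ρ = ½ log(1/r)`,
the integral bound then forces `(osc_{B_r} v)² log(1/r) ≤ 8 C₁ K²`. Otherwise
`osc_{B_r} v < 2 C₂ K r`, and `r ≤ 1/√(log(1/r))` because `log(1/r) ≤ 1/r ≤ 1/r²`.
-/

open MeasureTheory

noncomputable abbrev R2 := EuclideanSpace ℝ (Fin 2)

noncomputable def osc (v : R2 → ℝ) (K : Set R2) : ℝ := sSup (v '' K) - sInf (v '' K)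

open Real Set Pointwise

lemma osc_sphere_eq_osc_comp_smul (v : R2 → ℝ) {ρ : ℝ} (hρ : 0 < ρ) :
    osc v (Metric.sphere 0 ρ) = osc (fun p => v (ρ • p)) (Metric.sphere 0 1) := by
  have hsphere : Metric.sphere (0 : R2) ρ = ρ • Metric.sphere 0 1 := by
    rw [smul_sphere' hρ.ne', smul_zero, norm_of_nonneg hρ.le, mul_one]
  rw [osc, osc, hsphere, ← image_smul, image_image]

lemma continuousOn_osc_sphere {v : R2 → ℝ} (hv : Continuous v) :
    ContinuousOn (fun ρ => osc v (Metric.sphere 0 ρ)) (Ioi 0) := by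
  have hK : IsCompact (Metric.sphere (0 : R2) 1) := isCompact_sphere _ _
  have hf : Continuous (Function.uncurry fun (ρ : ℝ) (p : R2) => v (ρ • p)) :=
    hv.comp (continuous_fst.smul continuous_snd)
  exact ((hK.continuous_sSup hf).sub (hK.continuous_sInf hf)).continuousOn.congr
    fun ρ hρ => osc_sphere_eq_osc_comp_smul v hρ

lemma integral_inv_Icc_sqrt {r : ℝ} (hr : 0 < r) (hr1 : r ≤ 1) :
    ∫ ρ in Icc r √r, ρ⁻¹ = log (1 / r) / 2 := by
  have hrs : r ≤ √r := (le_sqrt hr.le hr.le).2 (by nlinarith)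
  rw [integral_Icc_eq_integral_Ioc, ← intervalIntegral.integral_of_le hrs,
    integral_inv_of_pos hr (sqrt_pos.2 hr), sqrt_div_self', one_div, log_inv, log_sqrt hr.le,
    one_div, log_inv]
  ring

lemma sq_mul_log_le_integral {f : ℝ → ℝ} {r c : ℝ} (hr : 0 < r) (hr1 : r ≤ 1) (hc : 0 ≤ c)
    (hf : ContinuousOn f (Icc r √r)) (hcf : ∀ ρ ∈ Icc r √r, c ≤ f ρ) :
    c ^ 2 * (log (1 / r) / 2) ≤ ∫ ρ in Icc r √r, ρ⁻¹ * f ρ ^ 2 := by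
  have hpos : ∀ ρ ∈ Icc r √r, 0 < ρ := fun ρ hρ => hr.trans_le hρ.1
  have hinv : ContinuousOn (fun ρ : ℝ => ρ⁻¹) (Icc r √r) :=
    continuousOn_id.inv₀ fun ρ hρ => (hpos ρ hρ).ne'
  rw [← integral_inv_Icc_sqrt hr hr1, ← integral_const_mul]
  refine setIntegral_mono_on ((continuousOn_const.mul hinv).integrableOn_compact isCompact_Icc)
    ((hinv.mul (hf.pow 2)).integrableOn_compact isCompact_Icc) measurableSet_Icc fun ρ hρ => ?_
  rw [mul_comm]
  gcongr
  · exact inv_nonneg.2 (hpos ρ hρ).le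
  · exact hcf ρ hρ

lemma mul_sqrt_log_one_div_le_one {r : ℝ} (hr : 0 < r) (hr1 : r ≤ 1) :
    r * √(log (1 / r)) ≤ 1 := by
  have hL : 0 ≤ log (1 / r) := log_nonneg (by rw [le_div_iff₀ hr]; linarith)
  have hlog : log (1 / r) ≤ 1 / r := (log_le_sub_one_of_pos (by positivity)).trans (by linarith)
  have hsq : (r * √(log (1 / r))) ^ 2 ≤ 1 := by
    rw [mul_pow, sq_sqrt hL]
    calc r ^ 2 * log (1 / r) ≤ r ^ 2 * (1 / r) := by gcongr
      _ = r := by field_simp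
      _ ≤ 1 := hr1
  exact (pow_le_one_iff_of_nonneg (by positivity) two_ne_zero).1 hsq

/-- if `v ∈ H¹(B_{r₀})` satisfies `‖∇v‖_{L²}² ≤ C₁K²`,
`osc_{∂B_ρ} v ≥ osc_{B_r} v - C₂ K ρ²` for all `ρ ∈ [r,√r]` (where `r ≤ r₀² ≤ 1/4`), and
`C₁K² ≥ ∫_r^{√r} ρ⁻¹ (osc_{∂B_ρ} v)² dρ`, then `osc_{B_r} v ≤ C K/√(log(1/r))`, with `C`
depending only on `C₁, C₂`. -/
theorem stmt11 (C₁ C₂ : ℝ) (hC₁ : 0 ≤ C₁) (hC₂ : 0 ≤ C₂) :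
    ∃ C : ℝ, 0 < C ∧
    ∀ (v : R2 → ℝ) (r₀ r K : ℝ),
      0 < r₀ → r₀ ≤ 1 / 2 → 0 < r → r ≤ r₀ ^ 2 → 0 ≤ K →
      Differentiable ℝ v →
      (∫ x in Metric.ball (0 : R2) r₀, ‖fderiv ℝ v x‖ ^ 2) ≤ C₁ * K ^ 2 →
      (∀ ρ ∈ Set.Icc r (Real.sqrt r),
        osc v (Metric.sphere (0 : R2) ρ) ≥ osc v (Metric.ball (0 : R2) r) - C₂ * K * ρ ^ 2) →
      (∫ ρ in Set.Icc r (Real.sqrt r), ρ⁻¹ * (osc v (Metric.sphere (0 : R2) ρ)) ^ 2)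
        ≤ C₁ * K ^ 2 →
      osc v (Metric.ball (0 : R2) r) ≤ C * K / Real.sqrt (Real.log (1 / r)) := by
  refine ⟨√(8 * C₁) + 2 * C₂ + 1, by positivity, ?_⟩
  intro v r₀ r K hr₀ hr₀le hr hrr₀ hK hv _ hosc hint
  have hr1 : r ≤ 1 := by nlinarith
  have hL : 0 < log (1 / r) := log_pos (by rw [lt_div_iff₀ hr]; nlinarith)
  rw [le_div_iff₀ (sqrt_pos.2 hL)]
  set ω := osc v (Metric.ball 0 r)
  rcases le_or_gt ω (2 * C₂ * K * r) with hsmall | hlarge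
  · calc ω * √(log (1 / r)) ≤ 2 * C₂ * K * (r * √(log (1 / r))) := by
          rw [← mul_assoc]; gcongr
      _ ≤ 2 * C₂ * K := mul_le_of_le_one_right (by positivity) (mul_sqrt_log_one_div_le_one hr hr1)
      _ ≤ (√(8 * C₁) + 2 * C₂ + 1) * K := by gcongr; linarith [sqrt_nonneg (8 * C₁)]
  · have hω : 0 ≤ ω := by linarith [mul_nonneg (mul_nonneg hC₂ hK) hr.le]
    have hhalf : ∀ ρ ∈ Icc r √r, ω / 2 ≤ osc v (Metric.sphere 0 ρ) := fun ρ hρ => by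
      have hρ2 : ρ ^ 2 ≤ r := by
        simpa [sq_sqrt hr.le] using pow_le_pow_left₀ (hr.le.trans hρ.1) hρ.2 2
      linarith [hosc ρ hρ, mul_le_mul_of_nonneg_left hρ2 (mul_nonneg hC₂ hK)]
    have henergy := (sq_mul_log_le_integral hr hr1 (by linarith)
      ((continuousOn_osc_sphere hv.continuous).mono fun ρ hρ => hr.trans_le hρ.1) hhalf).trans hint
    have hbound : (ω * √(log (1 / r))) ^ 2 ≤ (√(8 * C₁) * K) ^ 2 := by
      rw [mul_pow, mul_pow, sq_sqrt hL.le, sq_sqrt (by positivity)]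
      linarith
    calc ω * √(log (1 / r)) ≤ √(8 * C₁) * K :=
          (pow_le_pow_iff_left₀ (by positivity) (by positivity) two_ne_zero).1 hbound
      _ ≤ (√(8 * C₁) + 2 * C₂ + 1) * K := by gcongr; linarith
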